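/- arXiv:1506.04980 — 2 statements merged into one kernel-verified Lean document; each statement's English description precedes it below -/
import Mathlib

section
/- Let A, B ∈ ℤ with 4A³ + 27B² ≠ 0 and let Q(u,v) = u(v³ + Au²v + Bu³). Then the quartic surface V ⊂ ℙ³ defined by the equation Q(x₀,x₁) − Q(x₂,x₃) = 0 is smooth. -/
open MvPolynomial

/-- The homogeneous quartic `Q(x₀,x₁) - Q(x₂,x₃)` cutting out the surface `V ⊂ ℙ³`,
where `Q(u,v) = u(v³ + Au²v + Bu³) = uv³ + Au³v + Bu⁴`, with coefficients in a
commutative ring `R`. -/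
noncomputable def FPoly (R : Type*) [CommRing R] (A B : ℤ) : MvPolynomial (Fin 4) R :=
  X 0 * X 1 ^ 3 + C (A : R) * X 0 ^ 3 * X 1 + C (B : R) * X 0 ^ 4
    - (X 2 * X 3 ^ 3 + C (A : R) * X 2 ^ 3 * X 3 + C (B : R) * X 2 ^ 4)

/-- Key algebraic lemma: a common zero of the gradient of `Q(u,v)` is the origin. -/
lemma key_grad (A B : ℤ) (hAB : 4 * A ^ 3 + 27 * B ^ 2 ≠ 0) (u v : ℂ)
    (h1 : v ^ 3 + 3 * A * u ^ 2 * v + 4 * B * u ^ 3 = 0)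
    (h2 : 3 * u * v ^ 2 + A * u ^ 3 = 0) : u = 0 ∧ v = 0 := by
  have hu : u = 0 := by
    by_contra hu
    have hE2 : 3 * v ^ 2 + (A : ℂ) * u ^ 2 = 0 := by
      have h : u * (3 * v ^ 2 + (A : ℂ) * u ^ 2) = 0 := by linear_combination h2
      rcases mul_eq_zero.mp h with h | h
      · exact absurd h hu
      · exact h
    have hB : (B : ℂ) * u ^ 3 = 2 * v ^ 3 := by
      linear_combination (h1 - 3 * v * hE2) / 4
    have hA3 : (A : ℂ) ^ 3 * u ^ 6 = -27 * v ^ 6 := by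
      linear_combination ((A : ℂ) ^ 2 * u ^ 4 - 3 * A * u ^ 2 * v ^ 2 + 9 * v ^ 4) * hE2
    have hB2 : (B : ℂ) ^ 2 * u ^ 6 = 4 * v ^ 6 := by
      linear_combination ((B : ℂ) * u ^ 3 + 2 * v ^ 3) * hB
    have hzero : ((4 * A ^ 3 + 27 * B ^ 2 : ℤ) : ℂ) * u ^ 6 = 0 := by
      push_cast
      linear_combination 4 * hA3 + 27 * hB2
    have hc : ((4 * A ^ 3 + 27 * B ^ 2 : ℤ) : ℂ) ≠ 0 := Int.cast_ne_zero.mpr hAB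
    have : u ^ 6 = 0 := by
      rcases mul_eq_zero.mp hzero with h | h
      · exact absurd h hc
      · exact h
    exact hu (by simpa using this)
  refine ⟨hu, ?_⟩
  have : v ^ 3 = 0 := by
    rw [hu] at h1; linear_combination h1
  simpa using this

/-- The quartic surface `V : Q(x₀,x₁) - Q(x₂,x₃) = 0` in `ℙ³` is smooth, expressed via the
Jacobian criterion: over an algebraically closed field of characteristic zero (here `ℂ`), the
defining quartic and its partial derivatives have no common zero other than the origin. -/
theorem V_smooth (A B : ℤ) (hAB : 4 * A ^ 3 + 27 * B ^ 2 ≠ 0) :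
    ∀ x : Fin 4 → ℂ, eval x (FPoly ℂ A B) = 0 →
      (∀ i : Fin 4, eval x (pderiv i (FPoly ℂ A B)) = 0) → x = 0 := by
  intro x _ hd
  have h0 := hd 0
  have h1 := hd 1
  have h2 := hd 2
  have h3 := hd 3
  simp only [FPoly, map_sub, map_add, map_mul, pderiv_X, pderiv_C, pderiv_pow, pderiv_mul,
    Derivation.leibniz, Derivation.leibniz_pow] at h0 h1 h2 h3
  simp at h0 h1 h2 h3
  obtain ⟨ha, hb⟩ := key_grad A B hAB (x 0) (x 1) (by linear_combination h0)
    (by linear_combination h1)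
  obtain ⟨hc, hdd⟩ := key_grad A B hAB (x 2) (x 3) (by linear_combination -h2)
    (by linear_combination -h3)
  funext i
  fin_cases i <;> simpa using ‹_›
end

section
/- Let A, B ∈ ℤ with 4A³ + 27B² ≠ 0 and Q(u,v) = u(v³ + Au²v + Bu³). If (u,v) ∈ ℤ² is such that Q(u,v) is squarefree and nonzero, then the projective point P = (uv : 1 : u²) is a rational point on the quadratic twist E_{Q(u,v)} : Q(u,v)·y² = x³ + Ax + B, and h_x(P) = log max{|u|, |v|} (where in particular u and v are coprime). -/
/-- The binary quartic form `Q(u,v) = u(v³ + Au²v + Bu³)`. -/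
def QF (A B u v : ℤ) : ℤ := u * (v ^ 3 + A * u ^ 2 * v + B * u ^ 3)

/-- The Weil height of a rational number `x = a/b` in lowest terms: `log max {|a|, |b|}`;
for a point `P = (X : Y : Z)` on a plane cubic with `Z ≠ 0`, the height `h_x(P)` is the
height of its affine `x`-coordinate `X/Z`. -/
noncomputable def hxQ (x : ℚ) : ℝ := Real.log (max |(x.num : ℝ)| (x.den : ℝ))

/-! A common divisor `d` of `u` and `v` gives `d² ∣ Q(u,v)`, so squarefreeness forces `u, v`
coprime; hence `uv/u² = v/u` is in lowest terms up to the sign of `u`, with numerator `±v` and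
denominator `|u|`. -/

theorem mul_self_dvd_QF {A B u v d : ℤ} (hu : d ∣ u) (hv : d ∣ v) : d * d ∣ QF A B u v :=
  mul_dvd_mul hu <| dvd_add (dvd_add (dvd_pow hv three_ne_zero)
    (dvd_mul_of_dvd_right hv _)) (dvd_mul_of_dvd_right (dvd_pow hu three_ne_zero) _)

theorem isCoprime_of_squarefree_QF {A B u v : ℤ} (hsf : Squarefree (QF A B u v)) :
    IsCoprime u v :=
  isRelPrime_iff_isCoprime.mp fun d hu hv => hsf d (mul_self_dvd_QF hu hv)

theorem ne_zero_of_squarefree_QF {A B u v : ℤ} (hsf : Squarefree (QF A B u v)) : u ≠ 0 := by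
  rintro rfl
  simp [QF] at hsf

theorem QF_mul_sq (A B u v : ℤ) :
    QF A B u v * u ^ 2 = (u * v) ^ 3 + A * (u * v) * (u ^ 2) ^ 2 + B * (u ^ 2) ^ 3 := by
  rw [QF]; ring

theorem hxQ_div_of_isCoprime {u v : ℤ} (hu : u ≠ 0) (h : IsCoprime u v) :
    hxQ ((v : ℚ) / u) = Real.log (max |(u : ℝ)| |(v : ℝ)|) := by
  have hgcd : u.gcd v = 1 := Int.isCoprime_iff_gcd_eq_one.mp h
  rw [hxQ, ← Rat.divInt_eq_div, Rat.num_divInt, Rat.den_divInt, if_neg hu, hgcd, Nat.cast_one,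
    Int.ediv_one, Nat.div_one, max_comm]
  push_cast
  rw [abs_mul, ← Int.cast_abs, Int.abs_sign_of_ne_zero hu, Int.cast_one, one_mul, Nat.cast_natAbs,
    Int.cast_abs]

theorem point_on_twist_general (A B : ℤ) (u v : ℤ)
    (hsf : Squarefree (QF A B u v)) :
    IsCoprime u v ∧
    QF A B u v * 1 ^ 2 * u ^ 2 =
      (u * v) ^ 3 + A * (u * v) * (u ^ 2) ^ 2 + B * (u ^ 2) ^ 3 ∧
    hxQ ((u * v : ℚ) / (u ^ 2 : ℚ)) = Real.log (max (|u| : ℝ) (|v| : ℝ)) := by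
  have hcop := isCoprime_of_squarefree_QF hsf
  have hx : (u * v : ℚ) / (u ^ 2 : ℚ) = v / u := by
    field_simp [ne_zero_of_squarefree_QF hsf]
  refine ⟨hcop, by rw [one_pow, mul_one, QF_mul_sq], ?_⟩
  rw [hx]
  exact hxQ_div_of_isCoprime (ne_zero_of_squarefree_QF hsf) hcop

/-- If `Q(u,v)` is squarefree and nonzero, then `u` and `v` are coprime, the projective point
`P = (uv : 1 : u²)` lies on the quadratic twist `E_{Q(u,v)} : d·y²·z = x³ + A·x·z² + B·z³`
(with `d = Q(u,v)`), and `h_x(P) = log max {|u|, |v|}` (here the affine `x`-coordinate of `P`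
is `uv/u² = v/u`). -/
theorem point_on_twist (A B : ℤ) (hAB : 4 * A ^ 3 + 27 * B ^ 2 ≠ 0) (u v : ℤ)
    (hsf : Squarefree (QF A B u v)) (hne : QF A B u v ≠ 0) :
    IsCoprime u v ∧
    QF A B u v * 1 ^ 2 * u ^ 2 =
      (u * v) ^ 3 + A * (u * v) * (u ^ 2) ^ 2 + B * (u ^ 2) ^ 3 ∧
    hxQ ((u * v : ℚ) / (u ^ 2 : ℚ)) = Real.log (max (|u| : ℝ) (|v| : ℝ)) :=
  point_on_twist_general A B u v hsf
end
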